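/- arXiv:1410.7667 — 8 statements merged into one kernel-verified Lean document; each statement's English description precedes it below -/
import Mathlib

section
/- For every Gaussian integer a = (x, y) ∈ ℤ[i], the 4-tuple ((x,y), (-y,x), (-x,-y), (y,-x)) is a cycle of the map γ_{-i} : ℤ[i] → ℤ[i] given by γ_{-i}(z) = -⌊-i·z⌋. Consequently, if a ≠ 0 then the orbit of a under γ_{-i} never reaches 0, so -i does not have the finiteness property. -/
/-- Gaussian SRS map: `γ_r(a) = -⌊r·a⌋`, identifying `ℂ ≅ ℝ × ℝ` and `ℤ[i] ≅ ℤ × ℤ`. -/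
noncomputable def gsrs (r : ℝ × ℝ) (a : ℤ × ℤ) : ℤ × ℤ :=
  (-⌊r.1 * (a.1 : ℝ) - r.2 * (a.2 : ℝ)⌋, -⌊r.1 * (a.2 : ℝ) + r.2 * (a.1 : ℝ)⌋)

lemma gsrs_neg_i (a : ℤ × ℤ) : gsrs (0, -1) a = (-a.2, a.1) := by
  simp [gsrs]; push_cast [← Int.cast_neg]; rw [Int.floor_intCast]; ring

theorem gsrs_neg_i_four_cycle_and_no_finiteness :
    (∀ x y : ℤ,
      gsrs (0, -1) (x, y) = (-y, x) ∧
      gsrs (0, -1) (-y, x) = (-x, -y) ∧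
      gsrs (0, -1) (-x, -y) = (y, -x) ∧
      gsrs (0, -1) (y, -x) = (x, y)) ∧
    (∀ a : ℤ × ℤ, a ≠ (0, 0) → ∀ n : ℕ, (gsrs (0, -1))^[n] a ≠ (0, 0)) := by
  constructor
  · intro x y
    refine ⟨?_, ?_, ?_, ?_⟩ <;> simp [gsrs_neg_i]
  · intro a ha n
    induction n generalizing a with
    | zero => simpa using ha
    | succ n ih =>
      rw [Function.iterate_succ_apply]
      apply ih
      rw [gsrs_neg_i]
      intro h
      apply ha
      have h1 := congrArg Prod.fst h
      have h2 := congrArg Prod.snd h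
      simp at h1 h2
      exact Prod.ext h2 h1
end

section
/- Let n ≥ 2 be a natural number and let r = (x,y) ∈ ℝ² ≅ ℂ satisfy |r| = 1 and 0 < y·(n-1) ≤ x. Let z = (a,b) ∈ ℤ² ≅ ℤ[i] with |a| + |b| ≤ n, max(|a|,|b|) < n, a > 0 and b ≥ 0. Then the product r·z = (xa - yb, xb + ya) satisfies a - 1 ≤ xa - yb < a and b < xb + ya < b + 1. -/
theorem rotation_step_first_quadrant (n : ℕ) (hn : 2 ≤ n) (x y : ℝ)
    (hr : x^2 + y^2 = 1) (hy : 0 < y * ((n : ℝ) - 1)) (hyx : y * ((n : ℝ) - 1) ≤ x)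
    (a b : ℤ) (hab : |a| + |b| ≤ (n : ℤ)) (hmax : max |a| |b| < (n : ℤ))
    (ha : 0 < a) (hb : 0 ≤ b) :
    (a : ℝ) - 1 ≤ x * (a : ℝ) - y * (b : ℝ) ∧
    x * (a : ℝ) - y * (b : ℝ) < (a : ℝ) ∧
    (b : ℝ) < x * (b : ℝ) + y * (a : ℝ) ∧
    x * (b : ℝ) + y * (a : ℝ) < (b : ℝ) + 1 := by
  have hn1 : (1:ℝ) ≤ (n:ℝ) - 1 := by
    have : (2:ℝ) ≤ (n:ℝ) := by exact_mod_cast hn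
    linarith
  have hy0 : 0 < y := by nlinarith
  have hx0 : 0 < x := lt_of_lt_of_le hy hyx
  have hx1 : x < 1 := by nlinarith
  have hyle : y ≤ 1 := by nlinarith
  have h1mx : 1 - x ≤ y ^ 2 := by nlinarith
  -- integer facts cast to ℝ
  rw [abs_of_pos ha, abs_of_nonneg hb] at hab hmax
  have ha1 : (1:ℝ) ≤ (a:ℝ) := by exact_mod_cast ha
  have hb0 : (0:ℝ) ≤ (b:ℝ) := by exact_mod_cast hb
  have hab' : (a:ℝ) + (b:ℝ) ≤ (n:ℝ) := by exact_mod_cast hab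
  have han : (a:ℝ) ≤ (n:ℝ) - 1 := by
    have : a ≤ (n:ℤ) - 1 := by omega
    exact_mod_cast this
  have hbn : (b:ℝ) ≤ (n:ℝ) - 1 := by
    have : b ≤ (n:ℤ) - 1 := by omega
    exact_mod_cast this
  have hA : (a:ℝ) - 1 ≤ (n:ℝ) - 1 - (b:ℝ) := by linarith
  -- key chain for first inequality
  have k1 : ((a:ℝ) - 1) * (1 - x) ≤ ((a:ℝ) - 1) * y ^ 2 :=
    mul_le_mul_of_nonneg_left h1mx (by linarith)
  have k2 : ((a:ℝ) - 1) * y ^ 2 ≤ ((n:ℝ) - 1 - (b:ℝ)) * y ^ 2 :=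
    mul_le_mul_of_nonneg_right hA (sq_nonneg y)
  have k3 : ((n:ℝ) - 1 - (b:ℝ)) * y ^ 2 ≤ ((n:ℝ) - 1 - (b:ℝ)) * y := by
    nlinarith
  refine ⟨?_, ?_, ?_, ?_⟩
  · nlinarith
  · nlinarith
  · nlinarith [mul_le_mul_of_nonneg_right hbn hy0.le, mul_le_mul_of_nonneg_right hyx hy0.le,
      mul_le_mul_of_nonneg_left h1mx hb0]
  · nlinarith [mul_le_mul_of_nonneg_right han hy0.le, mul_nonneg hb0 (by linarith : (0:ℝ) ≤ 1 - x)]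
end

section
/- Let n ≥ 2 and r = (x,y) ∈ ℂ with |r| = 1 and 0 < y·(n-1) ≤ x. Let z = (a,b) ∈ ℤ[i] with |a| + |b| ≤ n and max(|a|,|b|) < n. If a ≤ 0 and b > 0 then the product r·z = (xa - yb, xb + ya) satisfies a - 1 < xa - yb < a and b - 1 ≤ xb + ya < b; if a < 0 and b ≤ 0 then a < xa - yb ≤ a + 1 and b - 1 < xb + ya < b; if a ≥ 0 and b < 0 then a < xa - yb < a + 1 and b < xb + ya ≤ b + 1. -/
/-- Hard inequality: `(1-x)*p + y*q ≤ 1` when `p ≥ 1`, `p + q ≤ m + 1`. -/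
private lemma rot_aux1 (x y m p q : ℝ) (hxy : 1 ≤ x + y) (hy0 : 0 < y)
    (hym : y * m ≤ x) (hp : 1 ≤ p) (hpq : p + q ≤ m + 1) :
    (1 - x) * p + y * q ≤ 1 := by
  nlinarith [mul_nonneg (sub_nonneg.2 hp) (sub_nonneg.2 hxy),
    mul_nonneg hy0.le (by linarith : (0:ℝ) ≤ m + 1 - p - q)]

/-- `(1-x)*t < y*s` when `0 ≤ t ≤ m`, `1 ≤ s`. -/
private lemma rot_aux2 (x y m t s : ℝ) (hx0 : 0 < x) (hx1 : x < 1) (hy0 : 0 < y)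
    (hr : x^2 + y^2 = 1) (hym : y * m ≤ x) (ht0 : 0 ≤ t) (htm : t ≤ m)
    (hs : 1 ≤ s) : (1 - x) * t < y * s := by
  have h1 : y * t ≤ x := by linarith [mul_le_mul_of_nonneg_left htm hy0.le]
  have h2 : (1 - x) * t * (1 + x) = y^2 * t := by nlinarith [hr]
  nlinarith [mul_nonneg (mul_nonneg (sub_nonneg.2 hx1.le) ht0) hx0.le,
    mul_le_mul_of_nonneg_left h1 hy0.le, mul_lt_mul_of_pos_right hx1 hy0]

theorem rotation_step_other_quadrants (n : ℕ) (hn : 2 ≤ n) (x y : ℝ)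
    (hr : x^2 + y^2 = 1) (hy : 0 < y * ((n : ℝ) - 1)) (hyx : y * ((n : ℝ) - 1) ≤ x)
    (a b : ℤ) (hab : |a| + |b| ≤ (n : ℤ)) (hmax : max |a| |b| < (n : ℤ)) :
    (a ≤ 0 → 0 < b →
      (a : ℝ) - 1 < x * (a : ℝ) - y * (b : ℝ) ∧ x * (a : ℝ) - y * (b : ℝ) < (a : ℝ) ∧
      (b : ℝ) - 1 ≤ x * (b : ℝ) + y * (a : ℝ) ∧ x * (b : ℝ) + y * (a : ℝ) < (b : ℝ)) ∧
    (a < 0 → b ≤ 0 →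
      (a : ℝ) < x * (a : ℝ) - y * (b : ℝ) ∧ x * (a : ℝ) - y * (b : ℝ) ≤ (a : ℝ) + 1 ∧
      (b : ℝ) - 1 < x * (b : ℝ) + y * (a : ℝ) ∧ x * (b : ℝ) + y * (a : ℝ) < (b : ℝ)) ∧
    (0 ≤ a → b < 0 →
      (a : ℝ) < x * (a : ℝ) - y * (b : ℝ) ∧ x * (a : ℝ) - y * (b : ℝ) < (a : ℝ) + 1 ∧
      (b : ℝ) < x * (b : ℝ) + y * (a : ℝ) ∧ x * (b : ℝ) + y * (a : ℝ) ≤ (b : ℝ) + 1) := by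
  have hn2 : (2:ℝ) ≤ (n:ℝ) := by exact_mod_cast hn
  have hm : (1:ℝ) ≤ (n:ℝ) - 1 := by linarith
  have hy0 : 0 < y := by nlinarith
  have hx0 : 0 < x := lt_of_lt_of_le hy hyx
  have hx1 : x < 1 := by nlinarith [mul_pos hy0 hy0]
  have hxy : 1 ≤ x + y := by nlinarith [mul_pos hx0 hy0]
  obtain ⟨ha1, ha2⟩ := abs_le.mp (by omega : |a| ≤ (n:ℤ) - 1)
  obtain ⟨hb1, hb2⟩ := abs_le.mp (by omega : |b| ≤ (n:ℤ) - 1)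
  refine ⟨fun ha hb => ?_, fun ha hb => ?_, fun ha hb => ?_⟩
  · -- a ≤ 0 < b
    have habn : -a + b ≤ (n:ℤ) := by
      rw [abs_of_nonpos ha, abs_of_pos hb] at hab; linarith
    have hA0 : (a:ℝ) ≤ 0 := by exact_mod_cast ha
    have hB1 : (1:ℝ) ≤ (b:ℝ) := by exact_mod_cast hb
    have hAm : -(a:ℝ) ≤ (n:ℝ) - 1 := by exact_mod_cast (by omega : -a ≤ (n:ℤ) - 1)
    have hBm : (b:ℝ) ≤ (n:ℝ) - 1 := by exact_mod_cast hb2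
    have hABn : -(a:ℝ) + (b:ℝ) ≤ (n:ℝ) := by exact_mod_cast habn
    have hyB : y * (b:ℝ) ≤ x := by linarith [mul_le_mul_of_nonneg_left hBm hy0.le]
    refine ⟨by linarith [mul_nonneg (sub_nonneg.2 hx1.le) (neg_nonneg.2 hA0)], ?_, ?_, ?_⟩
    · have := rot_aux2 x y ((n:ℝ)-1) (-(a:ℝ)) (b:ℝ) hx0 hx1 hy0 hr hyx
        (by linarith) hAm hB1
      linarith [this]
    · have := rot_aux1 x y ((n:ℝ)-1) (b:ℝ) (-(a:ℝ)) hxy hy0 hyx hB1 (by linarith)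
      linarith [this]
    · linarith [mul_nonneg hy0.le (neg_nonneg.2 hA0),
        mul_pos (sub_pos.2 hx1) (by linarith : (0:ℝ) < (b:ℝ))]
  · -- a < 0, b ≤ 0
    have habn : -a + -b ≤ (n:ℤ) := by
      rw [abs_of_neg ha, abs_of_nonpos hb] at hab; linarith
    have hA1 : (1:ℝ) ≤ -(a:ℝ) := by exact_mod_cast (by omega : (1:ℤ) ≤ -a)
    have hB0 : (b:ℝ) ≤ 0 := by exact_mod_cast hb
    have hAm : -(a:ℝ) ≤ (n:ℝ) - 1 := by exact_mod_cast (by omega : -a ≤ (n:ℤ) - 1)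
    have hBm : -(b:ℝ) ≤ (n:ℝ) - 1 := by exact_mod_cast (by omega : -b ≤ (n:ℤ) - 1)
    have hABn : -(a:ℝ) + -(b:ℝ) ≤ (n:ℝ) := by exact_mod_cast habn
    have hyA : y * -(a:ℝ) ≤ x := by linarith [mul_le_mul_of_nonneg_left hAm hy0.le]
    refine ⟨?_, ?_, ?_, ?_⟩
    · linarith [mul_nonneg hy0.le (neg_nonneg.2 hB0),
        mul_pos (sub_pos.2 hx1) (by linarith : (0:ℝ) < -(a:ℝ))]
    · have := rot_aux1 x y ((n:ℝ)-1) (-(a:ℝ)) (-(b:ℝ)) hxy hy0 hyx hA1 (by linarith)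
      linarith [this]
    · linarith [mul_nonneg (sub_nonneg.2 hx1.le) (neg_nonneg.2 hB0)]
    · have := rot_aux2 x y ((n:ℝ)-1) (-(b:ℝ)) (-(a:ℝ)) hx0 hx1 hy0 hr hyx
        (by linarith) hBm hA1
      linarith [this]
  · -- 0 ≤ a, b < 0
    have habn : a + -b ≤ (n:ℤ) := by
      rw [abs_of_nonneg ha, abs_of_neg hb] at hab; linarith
    have hA0 : (0:ℝ) ≤ (a:ℝ) := by exact_mod_cast ha
    have hB1 : (1:ℝ) ≤ -(b:ℝ) := by exact_mod_cast (by omega : (1:ℤ) ≤ -b)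
    have hAm : (a:ℝ) ≤ (n:ℝ) - 1 := by exact_mod_cast ha2
    have hBm : -(b:ℝ) ≤ (n:ℝ) - 1 := by exact_mod_cast (by omega : -b ≤ (n:ℤ) - 1)
    have hABn : (a:ℝ) + -(b:ℝ) ≤ (n:ℝ) := by exact_mod_cast habn
    have hyB : y * -(b:ℝ) ≤ x := by linarith [mul_le_mul_of_nonneg_left hBm hy0.le]
    refine ⟨?_, ?_, ?_, ?_⟩
    · have := rot_aux2 x y ((n:ℝ)-1) ((a:ℝ)) (-(b:ℝ)) hx0 hx1 hy0 hr hyx hA0 hAm hB1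
      linarith [this]
    · linarith [mul_nonneg (sub_nonneg.2 hx1.le) hA0]
    · linarith [mul_nonneg hy0.le hA0,
        mul_pos (sub_pos.2 hx1) (by linarith : (0:ℝ) < -(b:ℝ))]
    · have := rot_aux1 x y ((n:ℝ)-1) (-(b:ℝ)) ((a:ℝ)) hxy hy0 hyx hB1 (by linarith)
      linarith [this]
end

section
/- Let n ≥ 2 and r = (x,y) ∈ ℂ with |r| = 1 and 0 < y·(n-1) ≤ x. Let z = (a,b) ∈ ℤ[i] with |a| + |b| ≤ n, max(|a|,|b|) < n, and additionally |a| + |b| < n whenever a < 0 or b < 0. Then the second iterate of γ_r at z satisfies: γ_r²(z) = z + (-1,1) if a > 1 ∧ b ≥ 0; γ_r²(z) = z + (-1,0) if a = 1 ∧ b ≥ 0; γ_r²(z) = z + (-1,-1) if a ≤ 0 ∧ b > 1; γ_r²(z) = z + (0,-1) if a ≤ 0 ∧ b = 1; γ_r²(z) = z + (1,-1) if a < 0 ∧ b ≤ 0; γ_r²(z) = z + (1,1) if a ≥ 0 ∧ b < 0. -/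
private lemma gsrs_eq (x y : ℝ) (a b p q : ℤ)
    (h1 : -(p:ℝ) ≤ x * a - y * b) (h2 : x * a - y * b < -(p:ℝ) + 1)
    (h3 : -(q:ℝ) ≤ x * b + y * a) (h4 : x * b + y * a < -(q:ℝ) + 1) :
    gsrs (x, y) (a, b) = (p, q) := by
  have e1 : ⌊x * (a:ℝ) - y * b⌋ = -p :=
    Int.floor_eq_iff.mpr ⟨by push_cast; linarith, by push_cast; linarith⟩
  have e2 : ⌊x * (b:ℝ) + y * a⌋ = -q :=
    Int.floor_eq_iff.mpr ⟨by push_cast; linarith, by push_cast; linarith⟩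
  simp only [gsrs, e1, e2, neg_neg]

private lemma tight_ineq (x y m k : ℝ) (hr : x^2 + y^2 = 1) (hy0 : 0 < y) (hy1 : y ≤ 1)
    (hx0 : 0 < x) (hm : 1 ≤ m) (hk : 0 ≤ k) (h1 : y*m + y*k ≤ x) :
    (1-x)*m + y*(1+k) ≤ 1 := by
  have key : (1+x) * (1 - ((1-x)*m + y*(1+k)))
      = (y*m - y)*(1+x-y) + (x - y*m - y*k)*(1+x) + (1-m)*(1 - x^2 - y^2) := by ring
  have e0 : (1:ℝ) - x^2 - y^2 = 0 := by linarith
  rw [e0, mul_zero, add_zero] at key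
  have hym : 0 ≤ (y*m - y) := by nlinarith [mul_nonneg hy0.le (sub_nonneg.2 hm)]
  have t0 : (0:ℝ) ≤ (y*m - y)*(1+x-y) := mul_nonneg hym (by linarith)
  have t1 : (0:ℝ) ≤ (x - y*m - y*k)*(1+x) := mul_nonneg (by linarith) (by linarith)
  nlinarith [key, t0, t1, hx0]

private lemma gsrs_case0 (x y : ℝ) (a b : ℤ) (hr : x^2+y^2 = 1) (hy0 : 0 < y) (hx0 : 0 < x)
    (hx1 : x < 1) (h1x : 1 - x ≤ y^2) (hy1 : y ≤ 1)
    (rA2 : (2:ℝ) ≤ (a:ℝ)) (rB0 : (0:ℝ) ≤ (b:ℝ))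
    (m1 : y * (a:ℝ) ≤ x) (m2 : y * (b:ℝ) ≤ x - y) :
    gsrs (x, y) (gsrs (x, y) (a, b)) = (a - 1, b + 1) := by
  have hxx : (0:ℝ) ≤ 1 - x := by linarith
  have p1 : (1-x) * (a:ℝ) ≤ y^2 * (a:ℝ) := mul_le_mul_of_nonneg_right h1x (by linarith)
  have p2 : y * (y * (a:ℝ)) ≤ y * x := mul_le_mul_of_nonneg_left m1 hy0.le
  have p3 : y * x ≤ y * 1 := mul_le_mul_of_nonneg_left hx1.le hy0.le
  have p4 : (1-x) * (b:ℝ) ≤ y^2 * (b:ℝ) := mul_le_mul_of_nonneg_right h1x rB0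
  have p5 : y * (y * (b:ℝ)) ≤ y * (x - y) := mul_le_mul_of_nonneg_left m2 hy0.le
  have p6 : (0:ℝ) ≤ y * (b:ℝ) := mul_nonneg hy0.le rB0
  have p7 : (0:ℝ) ≤ (1-x) * (b:ℝ) := mul_nonneg hxx rB0
  have p8 : (0:ℝ) ≤ (1-x) * ((a:ℝ)-1) := mul_nonneg hxx (by linarith)
  have p9 : (1-x) * 2 ≤ (1-x) * (a:ℝ) := mul_le_mul_of_nonneg_left rA2 hxx
  have p10 : y * 2 ≤ y * (a:ℝ) := mul_le_mul_of_nonneg_left rA2 hy0.le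
  have p12 : y * (x - y) < y * 1 := by
    have : x - y < 1 := by linarith
    exact mul_lt_mul_of_pos_left this hy0
  have w1 : gsrs (x, y) (a, b) = (1 - a, -b) := by
    refine gsrs_eq x y a b (1-a) (-b) ?_ ?_ ?_ ?_ <;> push_cast
    · linarith [p1, p2, p3]
    · linarith [p9, p6]
    · linarith [p4, p5, p12, p10]
    · linarith [m1, p7]
  rw [w1]
  refine gsrs_eq x y (1-a) (-b) (a-1) (b+1) ?_ ?_ ?_ ?_ <;> push_cast
  · linarith [p8, p6]
  · linarith [m2, p8]
  · linarith [m1, p7]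
  · linarith [p4, p5, p12, p10]

private lemma gsrs_case1 (x y : ℝ) (a b : ℤ) (ha : a = 1) (hr : x^2+y^2 = 1) (hy0 : 0 < y)
    (hx0 : 0 < x) (hx1 : x < 1) (h1x : 1 - x ≤ y^2) (hy1 : y ≤ 1) (hylex : y ≤ x)
    (rB0 : (0:ℝ) ≤ (b:ℝ)) (m1 : y * (b:ℝ) ≤ x) :
    gsrs (x, y) (gsrs (x, y) (a, b)) = (a - 1, b) := by
  subst ha
  have hxx : (0:ℝ) ≤ 1 - x := by linarith
  have q4 : (1-x) * (b:ℝ) ≤ y^2 * (b:ℝ) := mul_le_mul_of_nonneg_right h1x rB0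
  have q5 : y * (y * (b:ℝ)) ≤ y * x := mul_le_mul_of_nonneg_left m1 hy0.le
  have q3 : y * x ≤ y * 1 := mul_le_mul_of_nonneg_left hx1.le hy0.le
  have q6 : (0:ℝ) ≤ y * (b:ℝ) := mul_nonneg hy0.le rB0
  have q7 : (0:ℝ) ≤ (1-x) * (b:ℝ) := mul_nonneg hxx rB0
  have w1 : gsrs (x, y) ((1:ℤ), b) = (0, -b) := by
    refine gsrs_eq x y 1 b 0 (-b) ?_ ?_ ?_ ?_ <;> push_cast
    · linarith [m1]
    · linarith [q6]
    · linarith [q4, q5, q3]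
    · linarith [q7]
  rw [w1]
  have w2 : gsrs (x, y) ((0:ℤ), -b) = (0, b) := by
    refine gsrs_eq x y 0 (-b) 0 b ?_ ?_ ?_ ?_ <;> push_cast
    · linarith [q6]
    · linarith [m1]
    · linarith [q7]
    · linarith [q4, q5, q3]
  rw [w2]
  norm_num

private lemma gsrs_case2 (x y : ℝ) (a b : ℤ) (hr : x^2+y^2 = 1) (hy0 : 0 < y) (hx0 : 0 < x)
    (hx1 : x < 1) (h1x : 1 - x ≤ y^2) (hy1 : y ≤ 1)
    (rA0 : (a:ℝ) ≤ 0) (rB2 : (2:ℝ) ≤ (b:ℝ))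
    (m1 : y * (b:ℝ) ≤ x) (m3 : y * (-(a:ℝ)) ≤ x - 2*y) :
    gsrs (x, y) (gsrs (x, y) (a, b)) = (a - 1, b - 1) := by
  have hxx : (0:ℝ) ≤ 1 - x := by linarith
  have r1 : (1-x) * (-(a:ℝ)) ≤ y^2 * (-(a:ℝ)) := mul_le_mul_of_nonneg_right h1x (by linarith)
  have r2 : y * (y * (-(a:ℝ))) ≤ y * (x - 2*y) := mul_le_mul_of_nonneg_left m3 hy0.le
  have r3 : y * x ≤ y * 1 := mul_le_mul_of_nonneg_left hx1.le hy0.le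
  have r4 : (1-x) * (b:ℝ) ≤ y^2 * (b:ℝ) := mul_le_mul_of_nonneg_right h1x (by linarith)
  have r5 : y * (y * (b:ℝ)) ≤ y * x := mul_le_mul_of_nonneg_left m1 hy0.le
  have r6 : (0:ℝ) ≤ (1-x) * (-(a:ℝ)) := mul_nonneg hxx (by linarith)
  have r7 : (1-x) * 2 ≤ (1-x) * (b:ℝ) := mul_le_mul_of_nonneg_left rB2 hxx
  have r8 : y * 2 ≤ y * (b:ℝ) := mul_le_mul_of_nonneg_left rB2 hy0.le
  have r9 : (0:ℝ) ≤ y * (-(a:ℝ)) := mul_nonneg hy0.le (by linarith)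
  have r10 : (1-x) * (1-(a:ℝ)) ≤ y^2 * (1-(a:ℝ)) := mul_le_mul_of_nonneg_right h1x (by linarith)
  have r11 : y * (1-(a:ℝ)) ≤ x - y := by
    have : y * (1-(a:ℝ)) = y + y * (-(a:ℝ)) := by ring
    linarith [m3, hy0]
  have r12 : y * (y * (1-(a:ℝ))) ≤ y * (x - y) := mul_le_mul_of_nonneg_left r11 hy0.le
  have r13 : (0:ℝ) ≤ (1-x) * (1-(a:ℝ)) := mul_nonneg hxx (by linarith)
  have r14 : (0:ℝ) ≤ (1-x) * ((b:ℝ)-1) := mul_nonneg hxx (by linarith)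
  have r15 : (1-x) * ((b:ℝ)-1) ≤ y^2 * ((b:ℝ)-1) := mul_le_mul_of_nonneg_right h1x (by linarith)
  have r16 : y * (y * ((b:ℝ)-1)) ≤ y * x := by
    have h : y * ((b:ℝ)-1) ≤ x := by nlinarith [m1, hy0]
    exact mul_le_mul_of_nonneg_left h hy0.le
  have hsq : (0:ℝ) ≤ y^2 := sq_nonneg y
  have hsq' : (0:ℝ) < y*y := mul_pos hy0 hy0
  have w1 : gsrs (x, y) (a, b) = (1 - a, 1 - b) := by
    refine gsrs_eq x y a b (1-a) (1-b) ?_ ?_ ?_ ?_ <;> push_cast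
    · linarith [r6, m1]
    · linarith [r1, r2, r3, r8, hsq]
    · linarith [r4, r5, m3, r3]
    · linarith [r7, r9]
  rw [w1]
  refine gsrs_eq x y (1-a) (1-b) (a-1) (b-1) ?_ ?_ ?_ ?_ <;> push_cast
  · linarith [r10, r12, r3, r8, hsq]
  · linarith [m1, r13]
  · linarith [r14, r9, hy0]
  · linarith [r15, r16, r3, m3]

private lemma gsrs_case3 (x y : ℝ) (a b : ℤ) (hb : b = 1) (hr : x^2+y^2 = 1) (hy0 : 0 < y)
    (hx0 : 0 < x) (hx1 : x < 1) (h1x : 1 - x ≤ y^2) (hy1 : y ≤ 1) (hylex : y ≤ x)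
    (rA0 : (a:ℝ) ≤ 0) (m1 : y * (-(a:ℝ)) ≤ x - y) :
    gsrs (x, y) (gsrs (x, y) (a, b)) = (a, b - 1) := by
  subst hb
  have hxx : (0:ℝ) ≤ 1 - x := by linarith
  have s1 : (1-x) * (-(a:ℝ)) ≤ y^2 * (-(a:ℝ)) := mul_le_mul_of_nonneg_right h1x (by linarith)
  have s2 : y * (y * (-(a:ℝ))) ≤ y * (x - y) := mul_le_mul_of_nonneg_left m1 hy0.le
  have s3 : y * x ≤ y * 1 := mul_le_mul_of_nonneg_left hx1.le hy0.le
  have s4 : (0:ℝ) ≤ y * (-(a:ℝ)) := mul_nonneg hy0.le (by linarith)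
  have s5 : (0:ℝ) ≤ (1-x) * (-(a:ℝ)) := mul_nonneg hxx (by linarith)
  have s6 : y * x ≤ 1 * x := mul_le_mul_of_nonneg_right hy1 hx0.le
  have s7 : (1-x) * 1 ≤ (1-x) * (1-(a:ℝ)) := mul_le_mul_of_nonneg_left (by linarith) hxx
  have hsq' : (0:ℝ) < y*y := mul_pos hy0 hy0
  have w1 : gsrs (x, y) (a, (1:ℤ)) = (1 - a, 0) := by
    refine gsrs_eq x y a 1 (1-a) 0 ?_ ?_ ?_ ?_ <;> push_cast
    · linarith [s5, hylex]
    · linarith [s1, s2, s3, hsq']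
    · linarith [m1, hy0]
    · linarith [s4]
  rw [w1]
  have w2 : gsrs (x, y) ((1:ℤ) - a, 0) = (a, 0) := by
    refine gsrs_eq x y (1-a) 0 a 0 ?_ ?_ ?_ ?_ <;> push_cast
    · linarith [s1, s2, s3, s6, hsq']
    · linarith [s7]
    · linarith [s4, hy0]
    · linarith [m1]
  rw [w2]
  norm_num

private lemma gsrs_case4 (x y : ℝ) (a b : ℤ) (hr : x^2+y^2 = 1) (hy0 : 0 < y) (hx0 : 0 < x)
    (hx1 : x < 1) (h1x : 1 - x ≤ y^2) (hy1 : y ≤ 1)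
    (rA1 : (1:ℝ) ≤ -(a:ℝ)) (rB0 : (0:ℝ) ≤ -(b:ℝ))
    (m1 : y * (-(a:ℝ)) + y * (-(b:ℝ)) ≤ x) (m4 : y * (-(b:ℝ)) ≤ x - y) :
    gsrs (x, y) (gsrs (x, y) (a, b)) = (a + 1, b - 1) := by
  have hxx : (0:ℝ) ≤ 1 - x := by linarith
  have t1 : (1-x) * (-(a:ℝ)) ≤ y^2 * (-(a:ℝ)) := mul_le_mul_of_nonneg_right h1x (by linarith)
  have t2 : (0:ℝ) ≤ (1-y) * (-(a:ℝ)) := mul_nonneg (by linarith) (by linarith)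
  have t3 : y * (y * (-(a:ℝ))) ≤ y * (-(a:ℝ)) := by
    have h : y * (-(a:ℝ)) ≤ -(a:ℝ) := by linarith [t2]
    exact mul_le_mul_of_nonneg_left h hy0.le
  have t4 : (1-x) * (-(b:ℝ)) ≤ y^2 * (-(b:ℝ)) := mul_le_mul_of_nonneg_right h1x rB0
  have t5 : (0:ℝ) ≤ (1-y) * (-(b:ℝ)) := mul_nonneg (by linarith) rB0
  have t6 : y * (y * (-(b:ℝ))) ≤ y * (-(b:ℝ)) := by
    have h : y * (-(b:ℝ)) ≤ -(b:ℝ) := by linarith [t5]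
    exact mul_le_mul_of_nonneg_left h hy0.le
  have t7 : y * (y * (-(b:ℝ))) ≤ y * (x - y) := mul_le_mul_of_nonneg_left m4 hy0.le
  have t8 : y * x ≤ y * 1 := mul_le_mul_of_nonneg_left hx1.le hy0.le
  have t9 : y * 1 ≤ y * (-(a:ℝ)) := mul_le_mul_of_nonneg_left rA1 hy0.le
  have t10 : (0:ℝ) ≤ (1-x) * (-(a:ℝ)) := mul_nonneg hxx (by linarith)
  have t11 : (0:ℝ) ≤ (1-x) * (-(b:ℝ)) := mul_nonneg hxx rB0
  have t12 : (0:ℝ) ≤ y * (-(b:ℝ)) := mul_nonneg hy0.le rB0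
  have t13 : (0:ℝ) ≤ y * (-(a:ℝ)) := mul_nonneg hy0.le (by linarith)
  have t14 : (1-x) * (1-(b:ℝ)) ≤ y^2 * (1-(b:ℝ)) := mul_le_mul_of_nonneg_right h1x (by linarith)
  have t15 : y * (1-(b:ℝ)) ≤ x := by
    have h : y * (1-(b:ℝ)) = y + y * (-(b:ℝ)) := by ring
    linarith [m4]
  have t16 : y * (y * (1-(b:ℝ))) ≤ y * x := mul_le_mul_of_nonneg_left t15 hy0.le
  have t17 : (0:ℝ) ≤ (1-x) * (1-(b:ℝ)) := mul_nonneg hxx (by linarith)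
  have hsq' : (0:ℝ) < y*y := mul_pos hy0 hy0
  have w1 : gsrs (x, y) (a, b) = (-a, 1 - b) := by
    refine gsrs_eq x y a b (-a) (1-b) ?_ ?_ ?_ ?_ <;> push_cast
    · linarith [t10, t12]
    · linarith [t1, t3, m1, hx1]
    · linarith [t4, t6, m1, hx1]
    · linarith [t4, t7, t8, hsq', t9]
  rw [w1]
  refine gsrs_eq x y (-a) (1-b) (a+1) (b-1) ?_ ?_ ?_ ?_ <;> push_cast
  · linarith [tight_ineq x y (-(a:ℝ)) (-(b:ℝ)) hr hy0 hy1 hx0 rA1 rB0 m1]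
  · linarith [t10, t12, hy0]
  · linarith [t14, t16, t8, t9]
  · linarith [m1, t12, hx1, t17]

private lemma gsrs_case5 (x y : ℝ) (a b : ℤ) (hr : x^2+y^2 = 1) (hy0 : 0 < y) (hx0 : 0 < x)
    (hx1 : x < 1) (h1x : 1 - x ≤ y^2) (hy1 : y ≤ 1)
    (rA0 : (0:ℝ) ≤ (a:ℝ)) (rB1 : (1:ℝ) ≤ -(b:ℝ))
    (m1 : y * (a:ℝ) + y * (-(b:ℝ)) ≤ x) (m2 : y * (a:ℝ) ≤ x - y) :
    gsrs (x, y) (gsrs (x, y) (a, b)) = (a + 1, b + 1) := by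
  have hxx : (0:ℝ) ≤ 1 - x := by linarith
  have u1 : (1-x) * (a:ℝ) ≤ y^2 * (a:ℝ) := mul_le_mul_of_nonneg_right h1x rA0
  have u2 : y * (y * (a:ℝ)) ≤ y * (x - y) := mul_le_mul_of_nonneg_left m2 hy0.le
  have u3 : y * x ≤ y * 1 := mul_le_mul_of_nonneg_left hx1.le hy0.le
  have u4 : y * 1 ≤ y * (-(b:ℝ)) := mul_le_mul_of_nonneg_left rB1 hy0.le
  have u5 : (0:ℝ) ≤ (1-x) * (a:ℝ) := mul_nonneg hxx rA0
  have u6 : (0:ℝ) ≤ y * (a:ℝ) := mul_nonneg hy0.le rA0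
  have u7 : (1-x) * (-(b:ℝ)) ≤ y^2 * (-(b:ℝ)) := mul_le_mul_of_nonneg_right h1x (by linarith)
  have u8 : (0:ℝ) ≤ (1-y) * (-(b:ℝ)) := mul_nonneg (by linarith) (by linarith)
  have u9 : y * (y * (-(b:ℝ))) ≤ y * (-(b:ℝ)) := by
    have h : y * (-(b:ℝ)) ≤ -(b:ℝ) := by linarith [u8]
    exact mul_le_mul_of_nonneg_left h hy0.le
  have u10 : (0:ℝ) ≤ (1-x) * (-(b:ℝ)) := mul_nonneg hxx (by linarith)
  have u11 : (1-x) * 1 ≤ (1-x) * (-(b:ℝ)) := mul_le_mul_of_nonneg_left rB1 hxx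
  have u12 : (0:ℝ) ≤ (1-y) * (a:ℝ) := mul_nonneg (by linarith) rA0
  have u13 : y * (y * (a:ℝ)) ≤ y * (a:ℝ) := by
    have h : y * (a:ℝ) ≤ (a:ℝ) := by linarith [u12]
    exact mul_le_mul_of_nonneg_left h hy0.le
  have hsq : (0:ℝ) ≤ y^2 := sq_nonneg y
  have hsq' : (0:ℝ) < y*y := mul_pos hy0 hy0
  have w1 : gsrs (x, y) (a, b) = (-a, -b) := by
    refine gsrs_eq x y a b (-a) (-b) ?_ ?_ ?_ ?_ <;> push_cast
    · linarith [u1, u2, u3, hsq, u4]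
    · linarith [m1, u6, hx1, u5]
    · linarith [u10, u6]
    · linarith [u7, u9, m1, hx1]
  rw [w1]
  refine gsrs_eq x y (-a) (-b) (a+1) (b+1) ?_ ?_ ?_ ?_ <;> push_cast
  · linarith [u1, u13, m1, hx1]
  · linarith [u1, u2, u3, hsq', u4]
  · linarith [u7, u9, m1, hx1]
  · linarith [u11, hx1, u6]

theorem gsrs_sq_unit_step (n : ℕ) (hn : 2 ≤ n) (x y : ℝ)
    (hr : x^2 + y^2 = 1) (hy : 0 < y * ((n : ℝ) - 1)) (hyx : y * ((n : ℝ) - 1) ≤ x)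
    (a b : ℤ) (hab : |a| + |b| ≤ (n : ℤ)) (hmax : max |a| |b| < (n : ℤ))
    (hneg : a < 0 ∨ b < 0 → |a| + |b| < (n : ℤ)) :
    (1 < a → 0 ≤ b → gsrs (x, y) (gsrs (x, y) (a, b)) = (a - 1, b + 1)) ∧
    (a = 1 → 0 ≤ b → gsrs (x, y) (gsrs (x, y) (a, b)) = (a - 1, b)) ∧
    (a ≤ 0 → 1 < b → gsrs (x, y) (gsrs (x, y) (a, b)) = (a - 1, b - 1)) ∧
    (a ≤ 0 → b = 1 → gsrs (x, y) (gsrs (x, y) (a, b)) = (a, b - 1)) ∧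
    (a < 0 → b ≤ 0 → gsrs (x, y) (gsrs (x, y) (a, b)) = (a + 1, b - 1)) ∧
    (0 ≤ a → b < 0 → gsrs (x, y) (gsrs (x, y) (a, b)) = (a + 1, b + 1)) := by
  obtain ⟨han, hbn⟩ := max_lt_iff.mp hmax
  have hN : (2:ℝ) ≤ (n:ℝ) := by exact_mod_cast hn
  have hy0 : 0 < y := by nlinarith
  have hx0 : 0 < x := lt_of_lt_of_le hy hyx
  have hx1 : x < 1 := by nlinarith
  have hy1 : y ≤ 1 := by nlinarith
  have h1x : 1 - x ≤ y^2 := by nlinarith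
  have hylex : y ≤ x := by
    have h := mul_le_mul_of_nonneg_left (show (1:ℝ) ≤ (n:ℝ) - 1 by linarith) hy0.le
    linarith
  refine ⟨?_, ?_, ?_, ?_, ?_, ?_⟩
  · -- case 0 : 1 < a, 0 ≤ b
    intro ha hb
    rw [abs_of_pos (by omega : (0:ℤ) < a)] at hab han
    rw [abs_of_nonneg hb] at hab hbn
    have rA2 : (2:ℝ) ≤ (a:ℝ) := by exact_mod_cast (show (2:ℤ) ≤ a by omega)
    have rB0 : (0:ℝ) ≤ (b:ℝ) := by exact_mod_cast hb
    have rAn : (a:ℝ) ≤ (n:ℝ) - 1 := by exact_mod_cast (show a ≤ (n:ℤ) - 1 by omega)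
    have rBn : (b:ℝ) ≤ (n:ℝ) - 2 := by exact_mod_cast (show b ≤ (n:ℤ) - 2 by omega)
    have m1 : y * (a:ℝ) ≤ x := by
      have h := mul_le_mul_of_nonneg_left rAn hy0.le; linarith
    have m2 : y * (b:ℝ) ≤ x - y := by
      have h := mul_le_mul_of_nonneg_left rBn hy0.le; nlinarith
    exact gsrs_case0 x y a b hr hy0 hx0 hx1 h1x hy1 rA2 rB0 m1 m2
  · -- case 1 : a = 1, 0 ≤ b
    intro ha hb
    rw [abs_of_nonneg hb] at hbn
    have rB0 : (0:ℝ) ≤ (b:ℝ) := by exact_mod_cast hb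
    have rBn : (b:ℝ) ≤ (n:ℝ) - 1 := by exact_mod_cast (show b ≤ (n:ℤ) - 1 by omega)
    have m1 : y * (b:ℝ) ≤ x := by
      have h := mul_le_mul_of_nonneg_left rBn hy0.le; linarith
    exact gsrs_case1 x y a b ha hr hy0 hx0 hx1 h1x hy1 hylex rB0 m1
  · -- case 2 : a ≤ 0, 1 < b
    intro ha hb
    have h' : -a + b ≤ (n:ℤ) - 1 := by
      rcases lt_or_eq_of_le ha with h | h
      · have := hneg (Or.inl h)
        rw [abs_of_neg h, abs_of_pos (by omega : (0:ℤ) < b)] at this; omega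
      · rw [abs_of_pos (by omega : (0:ℤ) < b)] at hbn; omega
    have rA0 : (a:ℝ) ≤ 0 := by exact_mod_cast ha
    have rB2 : (2:ℝ) ≤ (b:ℝ) := by exact_mod_cast (show (2:ℤ) ≤ b by omega)
    have rBn : (b:ℝ) ≤ (n:ℝ) - 1 := by
      rw [abs_of_pos (by omega : (0:ℤ) < b)] at hbn
      exact_mod_cast (show b ≤ (n:ℤ) - 1 by omega)
    have rnA : -(a:ℝ) ≤ (n:ℝ) - 3 := by exact_mod_cast (show -a ≤ (n:ℤ) - 3 by omega)
    have m1 : y * (b:ℝ) ≤ x := by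
      have h := mul_le_mul_of_nonneg_left rBn hy0.le; linarith
    have m3 : y * (-(a:ℝ)) ≤ x - 2*y := by
      have h := mul_le_mul_of_nonneg_left rnA hy0.le; nlinarith
    exact gsrs_case2 x y a b hr hy0 hx0 hx1 h1x hy1 rA0 rB2 m1 m3
  · -- case 3 : a ≤ 0, b = 1
    intro ha hb
    have h' : -a ≤ (n:ℤ) - 2 := by
      rcases lt_or_eq_of_le ha with h | h
      · have := hneg (Or.inl h)
        rw [abs_of_neg h, hb] at this; simp at this; omega
      · omega
    have rA0 : (a:ℝ) ≤ 0 := by exact_mod_cast ha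
    have rnA : -(a:ℝ) ≤ (n:ℝ) - 2 := by exact_mod_cast h'
    have m1 : y * (-(a:ℝ)) ≤ x - y := by
      have h := mul_le_mul_of_nonneg_left rnA hy0.le; nlinarith
    exact gsrs_case3 x y a b hb hr hy0 hx0 hx1 h1x hy1 hylex rA0 m1
  · -- case 4 : a < 0, b ≤ 0
    intro ha hb
    have h' := hneg (Or.inl ha)
    rw [abs_of_neg ha, abs_of_nonpos hb] at h'
    have rA1 : (1:ℝ) ≤ -(a:ℝ) := by exact_mod_cast (show (1:ℤ) ≤ -a by omega)
    have rB0 : (0:ℝ) ≤ -(b:ℝ) := by exact_mod_cast (show (0:ℤ) ≤ -b by omega)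
    have rs : -(a:ℝ) + -(b:ℝ) ≤ (n:ℝ) - 1 := by
      exact_mod_cast (show -a + -b ≤ (n:ℤ) - 1 by omega)
    have rBn : -(b:ℝ) ≤ (n:ℝ) - 2 := by exact_mod_cast (show -b ≤ (n:ℤ) - 2 by omega)
    have m1 : y * (-(a:ℝ)) + y * (-(b:ℝ)) ≤ x := by
      have h := mul_le_mul_of_nonneg_left rs hy0.le; nlinarith
    have m4 : y * (-(b:ℝ)) ≤ x - y := by
      have h := mul_le_mul_of_nonneg_left rBn hy0.le; nlinarith
    exact gsrs_case4 x y a b hr hy0 hx0 hx1 h1x hy1 rA1 rB0 m1 m4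
  · -- case 5 : 0 ≤ a, b < 0
    intro ha hb
    have h' := hneg (Or.inr hb)
    rw [abs_of_nonneg ha, abs_of_neg hb] at h'
    have rA0 : (0:ℝ) ≤ (a:ℝ) := by exact_mod_cast ha
    have rB1 : (1:ℝ) ≤ -(b:ℝ) := by exact_mod_cast (show (1:ℤ) ≤ -b by omega)
    have rs : (a:ℝ) + -(b:ℝ) ≤ (n:ℝ) - 1 := by
      exact_mod_cast (show a + -b ≤ (n:ℤ) - 1 by omega)
    have rAn : (a:ℝ) ≤ (n:ℝ) - 2 := by exact_mod_cast (show a ≤ (n:ℤ) - 2 by omega)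
    have m1 : y * (a:ℝ) + y * (-(b:ℝ)) ≤ x := by
      have h := mul_le_mul_of_nonneg_left rs hy0.le; nlinarith
    have m2 : y * (a:ℝ) ≤ x - y := by
      have h := mul_le_mul_of_nonneg_left rAn hy0.le; nlinarith
    exact gsrs_case5 x y a b hr hy0 hx0 hx1 h1x hy1 rA0 rB1 m1 m2
end

section
/- For every n ∈ ℕ with n ≥ 2 there exists m ∈ ℕ (one may take m = n² - ⌈n/2⌉) such that for all r = (x,y) ∈ ℂ with 0 < y·(n-1) ≤ x and |r| ≤ 1, and for all z ∈ M_n := {(a,b) ∈ ℤ[i] : |a| + |b| ≤ n ∧ ((a ≤ 0 ∨ b ≤ 0) → |a| + |b| < n)}, the m-th iterate γ_r^m(z) = 0. -/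
set_option maxHeartbeats 1600000


/-- Spiral rank on `ℤ × ℤ`. -/
def rho (z : ℤ × ℤ) : ℤ :=
  if 1 ≤ z.1 ∧ 0 ≤ z.2 then 2*(z.1+z.2)^2 - 3*(z.1+z.2) + 2*z.1
  else if 1 ≤ z.2 then 2*(z.2-z.1)^2 + (z.2-z.1) - 1 + 2*z.1
  else if 0 ≤ z.1 then 2*(z.1-z.2)^2 + (z.1-z.2) - 2*z.1
  else 2*(-z.1-z.2)^2 + (-z.1-z.2) - 2*z.1

lemma rho_eval_Q1 (a b : ℤ) (ha : 1 ≤ a) (hb : 0 ≤ b) :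
    rho (a, b) = 2*(a+b)^2 - 3*(a+b) + 2*a := by
  simp only [rho]; rw [if_pos ⟨ha, hb⟩]

lemma rho_eval_Q2 (a b : ℤ) (ha : a ≤ 0) (hb : 1 ≤ b) :
    rho (a, b) = 2*(b-a)^2 + (b-a) - 1 + 2*a := by
  simp only [rho]; rw [if_neg (by omega), if_pos hb]

lemma rho_eval_Q4 (a b : ℤ) (ha : 0 ≤ a) (hb : b ≤ -1) :
    rho (a, b) = 2*(a-b)^2 + (a-b) - 2*a := by
  simp only [rho]; rw [if_neg (by omega), if_neg (by omega), if_pos ha]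

lemma rho_eval_Q3 (a b : ℤ) (ha : a ≤ -1) (hb : b ≤ 0) :
    rho (a, b) = 2*(-a-b)^2 + (-a-b) - 2*a := by
  simp only [rho]; rw [if_neg (by omega), if_neg (by omega), if_neg (by omega)]

/-- value at `(-p,-q)` for `p q ≥ 0`. -/
lemma rho_eval_nn (p q : ℤ) (hp : 0 ≤ p) (hq : 0 ≤ q) :
    rho (-p, -q) = 2*(p+q)^2 + (p+q) + 2*p := by
  simp only [rho]
  split_ifs with h1 h2 h3
  · exfalso; omega
  · exfalso; omega
  · have hp0 : p = 0 := by omega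
    subst hp0; ring
  · ring

/-- value at `(P,-q)` for `P ≥ 1`, `q ≥ 0`. -/
lemma rho_eval_pn (P q : ℤ) (hP : 1 ≤ P) (hq : 0 ≤ q) :
    rho (P, -q) = 2*(P+q)^2 + (P+q) - 2*P := by
  simp only [rho]
  split_ifs with h1 h2 h3
  · have hq0 : q = 0 := by omega
    subst hq0; ring
  · exfalso; omega
  · ring
  · exfalso; omega

/-- value at `(-p,Q)` for `p ≥ 0`, `Q ≥ 1`. -/
lemma rho_eval_np (p Q : ℤ) (hp : 0 ≤ p) (hQ : 1 ≤ Q) :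
    rho (-p, Q) = 2*(Q+p)^2 + (Q+p) - 1 - 2*p := by
  simp only [rho]
  split_ifs with h1 h2
  · exfalso; omega
  · ring

lemma rho_pos (a b : ℤ) (h : ¬(a = 0 ∧ b = 0)) : 1 ≤ rho (a, b) := by
  simp only [rho]
  split_ifs with h1 h2 h3
  · nlinarith [h1.1, h1.2]
  · have : a ≤ 0 := by omega
    nlinarith [h2, this]
  · have : b ≤ 0 := by omega
    have hs : 1 ≤ a - b := by omega
    nlinarith [h3, this, hs]
  · have ha : a ≤ -1 := by omega
    have hb : b ≤ 0 := by omega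
    nlinarith [ha, hb]

lemma rho_le (n : ℕ) (hn : 2 ≤ n) (a b : ℤ) (h1 : |a| + |b| ≤ (n:ℤ))
    (h2 : (a ≤ 0 ∨ b ≤ 0) → |a| + |b| < (n:ℤ)) : rho (a, b) ≤ 2*(n:ℤ)*n := by
  have hnZ : (2:ℤ) ≤ (n:ℤ) := by exact_mod_cast hn
  simp only [rho]
  split_ifs with c1 c2 c3
  · obtain ⟨ha, hb⟩ := c1
    rw [abs_of_nonneg (by omega), abs_of_nonneg hb] at h1
    nlinarith [mul_nonneg (show (0:ℤ) ≤ (n:ℤ)-(a+b) by omega) (show (0:ℤ) ≤ (n:ℤ)+(a+b) by omega)]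
  · have ha : a ≤ 0 := by omega
    rw [abs_of_nonpos ha, abs_of_nonneg (by omega)] at h2
    have hs : -a + b < n := h2 (Or.inl ha)
    nlinarith [mul_nonneg (show (0:ℤ) ≤ (n:ℤ)-1-(b-a) by omega) (show (0:ℤ) ≤ (n:ℤ)-1+(b-a) by omega)]
  · have hb : b ≤ 0 := by omega
    rw [abs_of_nonneg c3, abs_of_nonpos hb] at h2
    have hs : a - b < n := h2 (Or.inr hb)
    nlinarith [mul_nonneg (show (0:ℤ) ≤ (n:ℤ)-1-(a-b) by omega) (show (0:ℤ) ≤ (n:ℤ)-1+(a-b) by omega), c3]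
  · have ha : a ≤ -1 := by omega
    have hb : b ≤ 0 := by omega
    rw [abs_of_nonpos (by omega), abs_of_nonpos hb] at h2
    have hs : -a - b < n := h2 (Or.inl (by omega))
    nlinarith [mul_nonneg (show (0:ℤ) ≤ (n:ℤ)-1-(-a-b) by omega) (show (0:ℤ) ≤ (n:ℤ)-1+(-a-b) by omega), ha]
lemma key_Q4aux (p q : ℤ) (n : ℕ) (x y : ℝ) (hnZ : (2:ℤ) ≤ (n:ℤ)) (hy : 0 < y)
    (hxy : y * ((n:ℝ) - 1) ≤ x) (hx : 0 < x) (hx1 : x < 1)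
    (a b : ℤ) (ha : 0 ≤ a) (hb : b ≤ -1) (h1 : |a| + |b| ≤ (n:ℤ))
    (h2 : (a ≤ 0 ∨ b ≤ 0) → |a| + |b| < (n:ℤ))
    (hpdef : p = ⌊x*(a:ℝ) - y*(b:ℝ)⌋) (hqdef : q = ⌊x*(b:ℝ) + y*(a:ℝ)⌋) :
    |(-p : ℤ)| + |(-q : ℤ)| ≤ (n:ℤ) ∧
      (((-p : ℤ) ≤ 0 ∨ (-q : ℤ) ≤ 0) → |(-p : ℤ)| + |(-q : ℤ)| < (n:ℤ)) ∧
      (¬(a = 0 ∧ b = 0) → rho (-p, -q) < rho (a, b)) := by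
  have hN : (2:ℝ) ≤ (n:ℝ) := by exact_mod_cast hnZ
  rw [abs_of_nonneg ha, abs_of_nonpos (by omega : b ≤ 0)] at h1 h2
  have hs : a - b < n := by have := h2 (Or.inr (by omega)); omega
  have haR : (0:ℝ) ≤ (a:ℝ) := by exact_mod_cast ha
  have hbR : (b:ℝ) ≤ -1 := by exact_mod_cast hb
  have hanR : (a:ℝ) ≤ (n:ℝ) - 2 := by
    have h' : a ≤ (n:ℤ) - 2 := by omega
    exact_mod_cast h'
  have hbnR : -(b:ℝ) ≤ (n:ℝ) - 1 := by
    have h' : -b ≤ (n:ℤ) - 1 := by omega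
    exact_mod_cast h'
  have hp0 : 0 ≤ p := by
    rw [hpdef]
    refine Int.le_floor.2 ?_
    push_cast
    nlinarith [mul_nonneg hx.le haR, mul_nonneg hy.le (by linarith : (0:ℝ) ≤ -(b:ℝ)-1)]
  have hpa : p ≤ a := by
    have : p < a + 1 := by
      rw [hpdef]
      refine Int.floor_lt.2 ?_
      push_cast
      nlinarith [mul_nonneg hy.le (by linarith : (0:ℝ) ≤ (n:ℝ)-1+(b:ℝ)),
        mul_pos (by linarith : (0:ℝ) < 1-x) (by linarith : (0:ℝ) < (a:ℝ)+1)]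
    omega
  have hq1 : q ≤ -1 := by
    have : q < 0 := by
      rw [hqdef]
      refine Int.floor_lt.2 ?_
      push_cast
      nlinarith [mul_nonneg hy.le (by linarith : (0:ℝ) ≤ (n:ℝ)-2-(a:ℝ)),
        mul_nonneg hx.le (by linarith : (0:ℝ) ≤ -(b:ℝ)-1)]
    omega
  have hqb : b ≤ q := by
    rw [hqdef]
    refine Int.le_floor.2 ?_
    push_cast
    nlinarith [mul_nonneg (by linarith : (0:ℝ) ≤ 1-x) (by linarith : (0:ℝ) ≤ -(b:ℝ)),
      mul_nonneg hy.le haR]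
  refine ⟨?_, ?_, ?_⟩
  · rw [abs_neg, abs_neg, abs_of_nonneg hp0, abs_of_nonpos (by omega : q ≤ 0)]
    omega
  · intro _
    rw [abs_neg, abs_neg, abs_of_nonneg hp0, abs_of_nonpos (by omega : q ≤ 0)]
    omega
  · intro _
    have hw : rho (-p, -q) = 2*((-q)+p)^2 + ((-q)+p) - 1 - 2*p := by
      have := rho_eval_np p (-q) hp0 (by omega)
      simpa using this
    rw [hw, rho_eval_Q4 a b ha hb]
    nlinarith [mul_nonneg (show (0:ℤ) ≤ (a-b)-((-q)+p) by omega)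
      (show (0:ℤ) ≤ (a-b)+((-q)+p)-1 by omega)]
section Key

variable (n : ℕ) (x y : ℝ)

lemma key_main (hn : 2 ≤ n) (hy : 0 < y) (hxy : y * ((n:ℝ) - 1) ≤ x)
    (hr : x^2 + y^2 ≤ 1) (a b : ℤ) (h1 : |a| + |b| ≤ (n:ℤ))
    (h2 : (a ≤ 0 ∨ b ≤ 0) → |a| + |b| < (n:ℤ)) :
    |(gsrs (x,y) (a,b)).1| + |(gsrs (x,y) (a,b)).2| ≤ (n:ℤ) ∧
      (((gsrs (x,y) (a,b)).1 ≤ 0 ∨ (gsrs (x,y) (a,b)).2 ≤ 0) →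
        |(gsrs (x,y) (a,b)).1| + |(gsrs (x,y) (a,b)).2| < (n:ℤ)) ∧
      (¬(a = 0 ∧ b = 0) → rho (gsrs (x,y) (a,b)) < rho (a,b)) := by
  have hnZ : (2:ℤ) ≤ (n:ℤ) := by exact_mod_cast hn
  have hN : (2:ℝ) ≤ (n:ℝ) := by exact_mod_cast hn
  have hx : 0 < x := lt_of_lt_of_le (by nlinarith) hxy
  have hx1 : x < 1 := by nlinarith
  have hgs : gsrs (x,y) (a,b) = (-⌊x*(a:ℝ) - y*(b:ℝ)⌋, -⌊x*(b:ℝ) + y*(a:ℝ)⌋) := rfl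
  rw [hgs]
  set p := ⌊x*(a:ℝ) - y*(b:ℝ)⌋ with hpdef
  set q := ⌊x*(b:ℝ) + y*(a:ℝ)⌋ with hqdef
  by_cases hzero : a = 0 ∧ b = 0
  · obtain ⟨rfl, rfl⟩ := hzero
    have hp0 : p = 0 := by
      rw [hpdef]; norm_num
    have hq0 : q = 0 := by
      rw [hqdef]; norm_num
    rw [hp0, hq0]
    refine ⟨by simp only [neg_zero, abs_zero, add_zero]; omega,
      fun _ => by simp only [neg_zero, abs_zero, add_zero]; omega,
      fun h => absurd ⟨rfl, rfl⟩ h⟩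
  rcases le_or_gt 1 a with ha | ha'
  · rcases le_or_gt 0 b with hb | hb'
    · -- Q1 : 1 ≤ a, 0 ≤ b
      rw [abs_of_nonneg (by omega : (0:ℤ) ≤ a), abs_of_nonneg hb] at h1 h2
      have han : a ≤ (n:ℤ) - 1 := by
        rcases eq_or_lt_of_le hb with h | h
        · have := h2 (Or.inr h.symm.le); omega
        · omega
      have hbn : b ≤ (n:ℤ) - 1 := by omega
      have haR : (1:ℝ) ≤ (a:ℝ) := by exact_mod_cast ha
      have hbR : (0:ℝ) ≤ (b:ℝ) := by exact_mod_cast hb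
      have hanR : (a:ℝ) ≤ (n:ℝ) - 1 := by
        exact_mod_cast han
      have hbnR : (b:ℝ) ≤ (n:ℝ) - 1 := by
        exact_mod_cast hbn
      have hp0 : 0 ≤ p := by
        rw [hpdef]
        refine Int.le_floor.2 ?_
        push_cast
        nlinarith [mul_nonneg hy.le (by linarith : (0:ℝ) ≤ (n:ℝ)-1-(b:ℝ)),
          mul_nonneg hx.le (by linarith : (0:ℝ) ≤ (a:ℝ)-1)]
      have hpa : p ≤ a - 1 := by
        have : p < a := by
          rw [hpdef]
          refine Int.floor_lt.2 ?_
          push_cast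
          nlinarith [mul_nonneg hy.le hbR, mul_pos (by linarith : (0:ℝ) < 1-x) (by linarith : (0:ℝ) < (a:ℝ))]
        omega
      have hq0 : 0 ≤ q := by
        rw [hqdef]
        refine Int.le_floor.2 ?_
        push_cast
        nlinarith [mul_nonneg hx.le hbR, mul_nonneg hy.le (by linarith : (0:ℝ) ≤ (a:ℝ))]
      have hqb : q ≤ b := by
        have : q < b + 1 := by
          rw [hqdef]
          refine Int.floor_lt.2 ?_
          push_cast
          nlinarith [mul_nonneg hy.le (by linarith : (0:ℝ) ≤ (n:ℝ)-1-(a:ℝ)),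
            mul_pos (by linarith : (0:ℝ) < 1-x) (by linarith : (0:ℝ) < (b:ℝ)+1)]
        omega
      refine ⟨?_, ?_, ?_⟩
      · rw [abs_neg, abs_neg, abs_of_nonneg hp0, abs_of_nonneg hq0]; omega
      · intro _
        rw [abs_neg, abs_neg, abs_of_nonneg hp0, abs_of_nonneg hq0]; omega
      · intro _
        rw [rho_eval_nn p q hp0 hq0, rho_eval_Q1 a b ha hb]
        nlinarith [mul_nonneg (show (0:ℤ) ≤ a+b-1-(p+q) by omega)
          (show (0:ℤ) ≤ a+b-1+(p+q) by omega)]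
    · -- Q4 with a ≥ 1
      exact key_Q4aux p q n x y hnZ hy hxy hx hx1 a b (by omega) (by omega) h1 h2 hpdef hqdef
  · rcases le_or_gt 1 b with hb | hb'
    · -- Q2 : a ≤ 0, 1 ≤ b
      have ha : a ≤ 0 := by omega
      rw [abs_of_nonpos ha, abs_of_nonneg (by omega : (0:ℤ) ≤ b)] at h1 h2
      have hs : -a + b < n := by have := h2 (Or.inl ha); omega
      have haR : (a:ℝ) ≤ 0 := by exact_mod_cast ha
      have hbR : (1:ℝ) ≤ (b:ℝ) := by exact_mod_cast hb
      have hanR : -(a:ℝ) ≤ (n:ℝ) - 2 := by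
        have h' : -a ≤ (n:ℤ) - 2 := by omega
        exact_mod_cast h'
      have hbnR : (b:ℝ) ≤ (n:ℝ) - 1 := by
        have h' : b ≤ (n:ℤ) - 1 := by omega
        exact_mod_cast h'
      have hp1 : p ≤ -1 := by
        have : p < 0 := by
          rw [hpdef]
          refine Int.floor_lt.2 ?_
          push_cast
          nlinarith [mul_nonneg hx.le (by linarith : (0:ℝ) ≤ -(a:ℝ)), mul_pos hy (by linarith : (0:ℝ) < (b:ℝ))]
        omega
      have hpa : a - 1 ≤ p := by
        rw [hpdef]
        refine Int.le_floor.2 ?_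
        push_cast
        nlinarith [mul_nonneg (by linarith : (0:ℝ) ≤ 1-x) (by linarith : (0:ℝ) ≤ -(a:ℝ)),
          mul_nonneg hy.le (by linarith : (0:ℝ) ≤ (n:ℝ)-1-(b:ℝ))]
      have hq0 : 0 ≤ q := by
        rw [hqdef]
        refine Int.le_floor.2 ?_
        push_cast
        nlinarith [mul_nonneg hx.le (by linarith : (0:ℝ) ≤ (b:ℝ)-1),
          mul_nonneg hy.le (by linarith : (0:ℝ) ≤ (n:ℝ)-2+(a:ℝ))]
      have hqb : q ≤ b - 1 := by
        have : q < b := by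
          rw [hqdef]
          refine Int.floor_lt.2 ?_
          push_cast
          nlinarith [mul_pos (by linarith : (0:ℝ) < 1-x) (by linarith : (0:ℝ) < (b:ℝ)),
            mul_nonneg hy.le (by linarith : (0:ℝ) ≤ -(a:ℝ))]
        omega
      refine ⟨?_, ?_, ?_⟩
      · rw [abs_neg, abs_neg, abs_of_nonpos (by omega : p ≤ 0), abs_of_nonneg hq0]
        omega
      · intro _
        rw [abs_neg, abs_neg, abs_of_nonpos (by omega : p ≤ 0), abs_of_nonneg hq0]
        omega
      · intro _
        have hw : rho (-p, -q) = 2*((-p)+q)^2 + ((-p)+q) - 2*(-p) :=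
          rho_eval_pn (-p) q (by omega) hq0
        rw [hw, rho_eval_Q2 a b ha hb]
        nlinarith [mul_nonneg (show (0:ℤ) ≤ (b-a)-((-p)+q) by omega)
          (show (0:ℤ) ≤ (b-a)+((-p)+q)-1 by omega)]
    · -- a ≤ 0, b ≤ 0, not both zero
      rcases le_or_gt a (-1) with ha | ha0
      · -- Q3 : a ≤ -1, b ≤ 0
        have hb : b ≤ 0 := by omega
        rw [abs_of_nonpos (by omega : a ≤ 0), abs_of_nonpos hb] at h1 h2
        have hs : -a - b < n := by have := h2 (Or.inl (by omega)); omega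
        have haR : (a:ℝ) ≤ -1 := by exact_mod_cast ha
        have hbR : (b:ℝ) ≤ 0 := by exact_mod_cast hb
        have hanR : -(a:ℝ) ≤ (n:ℝ) - 1 := by
          have h' : -a ≤ (n:ℤ) - 1 := by omega
          exact_mod_cast h'
        have hbnR : -(b:ℝ) ≤ (n:ℝ) - 2 := by
          have h' : -b ≤ (n:ℤ) - 2 := by omega
          exact_mod_cast h'
        have hp1 : p ≤ -1 := by
          have : p < 0 := by
            rw [hpdef]
            refine Int.floor_lt.2 ?_
            push_cast
            nlinarith [mul_nonneg hx.le (by linarith : (0:ℝ) ≤ -(a:ℝ)-1),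
              mul_nonneg hy.le (by linarith : (0:ℝ) ≤ (n:ℝ)-2+(b:ℝ))]
          omega
        have hpa : a ≤ p := by
          rw [hpdef]
          refine Int.le_floor.2 ?_
          push_cast
          nlinarith [mul_nonneg (by linarith : (0:ℝ) ≤ 1-x) (by linarith : (0:ℝ) ≤ -(a:ℝ)),
            mul_nonneg hy.le (by linarith : (0:ℝ) ≤ -(b:ℝ))]
        have hq1 : q ≤ -1 := by
          have : q < 0 := by
            rw [hqdef]
            refine Int.floor_lt.2 ?_
            push_cast
            nlinarith [mul_nonneg hx.le (by linarith : (0:ℝ) ≤ -(b:ℝ)),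
              mul_nonneg hy.le (by linarith : (0:ℝ) ≤ -(a:ℝ)-1)]
          omega
        have hqb : b - 1 ≤ q := by
          rw [hqdef]
          refine Int.le_floor.2 ?_
          push_cast
          nlinarith [mul_nonneg (by linarith : (0:ℝ) ≤ 1-x) (by linarith : (0:ℝ) ≤ -(b:ℝ)),
            mul_nonneg hy.le (by linarith : (0:ℝ) ≤ (n:ℝ)-1+(a:ℝ))]
        refine ⟨?_, ?_, ?_⟩
        · rw [abs_neg, abs_neg, abs_of_nonpos (by omega : p ≤ 0), abs_of_nonpos (by omega : q ≤ 0)]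
          omega
        · intro h
          exfalso
          rcases h with h | h <;> omega
        · intro _
          rw [rho_eval_Q1 (-p) (-q) (by omega) (by omega), rho_eval_Q3 a b ha hb]
          nlinarith [mul_nonneg (show (0:ℤ) ≤ (-a-b)+1-((-p)+(-q)) by omega)
            (show (0:ℤ) ≤ (-a-b)+((-p)+(-q))-1 by omega)]
      · -- a = 0, b ≤ -1
        have hb : b ≤ -1 := by omega
        exact key_Q4aux p q n x y hnZ hy hxy hx hx1 a b (by omega) hb h1 h2 hpdef hqdef

end Key

lemma gsrs_zero (x y : ℝ) : gsrs (x, y) (0, 0) = (0, 0) := by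
  simp [gsrs]

lemma reach (n : ℕ) (hn : 2 ≤ n) (x y : ℝ) (hy : 0 < y)
    (hxy : y * ((n:ℝ) - 1) ≤ x) (hr : x^2 + y^2 ≤ 1) :
    ∀ k : ℕ, ∀ a b : ℤ, |a| + |b| ≤ (n:ℤ) → ((a ≤ 0 ∨ b ≤ 0) → |a| + |b| < (n:ℤ)) →
      rho (a, b) ≤ (k:ℤ) → (gsrs (x, y))^[k] (a, b) = (0, 0) := by
  intro k
  induction k with
  | zero =>
    intro a b h1 h2 h3
    have hz : a = 0 ∧ b = 0 := by
      by_contra h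
      have := rho_pos a b h
      omega
    simp [hz.1, hz.2]
  | succ k ih =>
    intro a b h1 h2 h3
    by_cases hz : a = 0 ∧ b = 0
    · rw [hz.1, hz.2]
      exact Function.iterate_fixed (gsrs_zero x y) (k+1)
    · obtain ⟨m1, m2, m3⟩ := key_main n x y hn hy hxy hr a b h1 h2
      have hlt := m3 hz
      rw [Function.iterate_succ_apply]
      have hle : rho ((gsrs (x,y) (a,b)).1, (gsrs (x,y) (a,b)).2) ≤ (k:ℤ) := by
        push_cast at h3
        have : rho ((gsrs (x,y) (a,b)).1, (gsrs (x,y) (a,b)).2) = rho (gsrs (x,y) (a,b)) := by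
          rw [Prod.mk.eta]
        rw [this]
        linarith
      have := ih _ _ m1 m2 hle
      rwa [Prod.mk.eta] at this

theorem orbits_in_sector_reach_zero (n : ℕ) (hn : 2 ≤ n) :
    ∃ m : ℕ, ∀ x y : ℝ, 0 < y * ((n : ℝ) - 1) → y * ((n : ℝ) - 1) ≤ x →
      x^2 + y^2 ≤ 1 →
      ∀ a b : ℤ, |a| + |b| ≤ (n : ℤ) → ((a ≤ 0 ∨ b ≤ 0) → |a| + |b| < (n : ℤ)) →
        (gsrs (x, y))^[m] (a, b) = (0, 0) := by
  refine ⟨2*n*n, ?_⟩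
  intro x y hy0 hxy hr a b h1 h2
  have hN : (2:ℝ) ≤ (n:ℝ) := by exact_mod_cast hn
  have hy : 0 < y := by
    by_contra h
    push_neg at h
    nlinarith [mul_nonneg (neg_nonneg.2 h) (by linarith : (0:ℝ) ≤ (n:ℝ) - 1)]
  refine reach n hn x y hy hxy hr (2*n*n) a b h1 h2 ?_
  have := rho_le n hn a b h1 h2
  push_cast
  omega
end

section
/- The 7-tuple ((-3,0), (3,2), (-1,-2), (1,3), (1,-3), (-2,3), (3,-1)) of Gaussian integers is a cycle of γ_r for r = 7/8 + (3/8)i. Consequently 7/8 + (3/8)i does not have the finiteness property. -/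
theorem cycle_of_seven_eighths :
    (gsrs (7/8, 3/8) (-3, 0) = (3, 2) ∧
     gsrs (7/8, 3/8) (3, 2) = (-1, -2) ∧
     gsrs (7/8, 3/8) (-1, -2) = (1, 3) ∧
     gsrs (7/8, 3/8) (1, 3) = (1, -3) ∧
     gsrs (7/8, 3/8) (1, -3) = (-2, 3) ∧
     gsrs (7/8, 3/8) (-2, 3) = (3, -1) ∧
     gsrs (7/8, 3/8) (3, -1) = (-3, 0)) ∧
    ¬ (∀ a : ℤ × ℤ, ∃ n : ℕ, (gsrs (7/8, 3/8))^[n] a = (0, 0)) := by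
  have hc : (gsrs (7/8, 3/8) (-3, 0) = (3, 2) ∧
     gsrs (7/8, 3/8) (3, 2) = (-1, -2) ∧
     gsrs (7/8, 3/8) (-1, -2) = (1, 3) ∧
     gsrs (7/8, 3/8) (1, 3) = (1, -3) ∧
     gsrs (7/8, 3/8) (1, -3) = (-2, 3) ∧
     gsrs (7/8, 3/8) (-2, 3) = (3, -1) ∧
     gsrs (7/8, 3/8) (3, -1) = (-3, 0)) := by
    refine ⟨?_, ?_, ?_, ?_, ?_, ?_, ?_⟩ <;>
      simp only [gsrs, Prod.mk.injEq, neg_eq_iff_eq_neg] <;>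
      constructor <;> rw [Int.floor_eq_iff] <;> norm_num
  refine ⟨hc, ?_⟩
  intro h
  obtain ⟨h1, h2, h3, h4, h5, h6, h7⟩ := hc
  have key : ∀ n, (gsrs (7/8, 3/8))^[n] (-3, 0) ∈
      ({(-3,0),(3,2),(-1,-2),(1,3),(1,-3),(-2,3),(3,-1)} : Set (ℤ × ℤ)) := by
    intro n
    induction n with
    | zero => simp
    | succ n ih =>
      rw [Function.iterate_succ_apply']
      rcases ih with m | m | m | m | m | m | m <;> rw [m] <;>
        simp [h1, h2, h3, h4, h5, h6, h7]
  obtain ⟨n, hn⟩ := h (-3, 0)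
  have := key n
  rw [hn] at this
  simp [Prod.ext_iff] at this
end

section
/- Every Gaussian shift radix parameter with the finiteness property lies in the closed unit disk: if r ∈ ℂ satisfies that for all a ∈ ℤ[i] some iterate γ_r^n(a) = 0, then |r| ≤ 1. -/
lemma floor_sq_ge (x : ℝ) : x^2 - 2*|x| ≤ ((⌊x⌋ : ℤ) : ℝ)^2 := by
  have h1 : ((⌊x⌋ : ℤ) : ℝ) ≤ x := Int.floor_le x
  have h2 : x - 1 < ((⌊x⌋ : ℤ) : ℝ) := Int.sub_one_lt_floor x
  rcases abs_cases x with ⟨h, hx⟩ | ⟨h, hx⟩ <;> rw [h] <;> nlinarith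

set_option maxHeartbeats 1000000 in
lemma gsrs_grow (r : ℝ × ℝ) (hs : 1 < r.1^2 + r.2^2) (a : ℤ × ℤ)
    (ha : 8*(r.1^2+r.2^2)/(r.1^2+r.2^2-1)^2 ≤ (a.1 : ℝ)^2 + (a.2 : ℝ)^2) :
    (a.1 : ℝ)^2 + (a.2 : ℝ)^2 ≤ ((gsrs r a).1 : ℝ)^2 + ((gsrs r a).2 : ℝ)^2 := by
  set s := r.1^2 + r.2^2 with hsdef
  set q := (a.1 : ℝ)^2 + (a.2 : ℝ)^2 with hq
  have hs1 : 0 < s - 1 := by linarith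
  have hq0 : 0 < q := by
    have hC : 0 < 8*s/(s-1)^2 := by
      apply div_pos (by linarith) (by positivity)
    linarith
  set x := r.1 * (a.1 : ℝ) - r.2 * (a.2 : ℝ) with hx
  set y := r.1 * (a.2 : ℝ) + r.2 * (a.1 : ℝ) with hy
  have hxy : x^2 + y^2 = s * q := by rw [hx, hy, hsdef, hq]; ring
  set u := Real.sqrt (2*s*q) with hu
  have hu0 : 0 ≤ u := Real.sqrt_nonneg _
  have hu2 : u^2 = 2*s*q := Real.sq_sqrt (by positivity)
  have habs : |x| + |y| ≤ u := by
    have h2 : (|x| + |y|)^2 ≤ 2*(x^2 + y^2) := by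
      nlinarith [sq_abs x, sq_abs y, sq_nonneg (|x| - |y|)]
    nlinarith [abs_nonneg x, abs_nonneg y]
  have hCq : 8*s ≤ (s-1)^2 * q := by
    rw [div_le_iff₀ (by positivity)] at ha
    linarith [ha]
  have h2u : 2*u ≤ (s-1)*q := by
    have h4 : (2*u)^2 ≤ ((s-1)*q)^2 := by nlinarith
    nlinarith [mul_nonneg hs1.le hq0.le]
  have hfx := floor_sq_ge x
  have hfy := floor_sq_ge y
  have hring : s*q - (s-1)*q = q := by ring
  have hgoal : q ≤ ((⌊x⌋ : ℤ) : ℝ)^2 + ((⌊y⌋ : ℤ) : ℝ)^2 := by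
    linarith [hfx, hfy, habs, h2u, hxy, hring]
  have hg : gsrs r a = (-⌊x⌋, -⌊y⌋) := by unfold gsrs; rw [hx, hy]
  rw [hg]
  push_cast
  nlinarith [hgoal]

theorem finiteness_in_unit_disk (r : ℝ × ℝ)
    (h : ∀ a : ℤ × ℤ, ∃ n : ℕ, (gsrs r)^[n] a = (0, 0)) :
    r.1^2 + r.2^2 ≤ 1 := by
  by_contra hlt
  push_neg at hlt
  set s := r.1^2 + r.2^2 with hsdef
  set C := 8*s/(s-1)^2 with hC
  have hC0 : 0 < C := div_pos (by linarith) (by nlinarith)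
  set N : ℕ := ⌈Real.sqrt C⌉₊ + 1 with hN
  set a : ℤ × ℤ := ((N : ℤ), 0) with ha
  have haC : C ≤ (a.1 : ℝ)^2 + (a.2 : ℝ)^2 := by
    have h1 : Real.sqrt C ≤ (N : ℝ) := by
      have h0 := Nat.le_ceil (Real.sqrt C)
      have h2 : (N : ℝ) = (⌈Real.sqrt C⌉₊ : ℝ) + 1 := by rw [hN]; push_cast; ring
      linarith
    have hkey : (a.1 : ℝ)^2 + (a.2 : ℝ)^2 = (N : ℝ)^2 := by simp [ha]
    rw [hkey]
    nlinarith [Real.sqrt_nonneg C, Real.sq_sqrt hC0.le]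
  have hall : ∀ n : ℕ, C ≤ (((gsrs r)^[n] a).1 : ℝ)^2 + (((gsrs r)^[n] a).2 : ℝ)^2 := by
    intro n
    induction n with
    | zero => simpa using haC
    | succ n ih =>
      rw [Function.iterate_succ_apply']
      have := gsrs_grow r hlt ((gsrs r)^[n] a) ih
      linarith
  obtain ⟨n, hn⟩ := h a
  have := hall n
  rw [hn] at this
  norm_num at this
  linarith
end

section
/- Let r = (x,y) ∈ ℝ² ≅ ℂ and s = (x',y') ∈ ℝ² ≅ ℂ, and a = (a,b) ∈ ℤ² ≅ ℤ[i] with (a,b) ≠ (0,0). The set of s such that for all four maps γ^{(i)} (i = 1..4) one has γ_s^{(i)}(a) = γ_r^{(i)}(a) is the intersection of 4 half-open axis-aligned squares of side length 1/|a|, and in particular this set is convex. -/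
/-- Componentwise conjugation on `ℤ[i] ≅ ℤ × ℤ`. -/
def zconj (a : ℤ × ℤ) : ℤ × ℤ := (a.1, -a.2)

/-- The four variants of the map `γ_r`. -/
noncomputable def gsrsVar : Fin 4 → (ℝ × ℝ) → (ℤ × ℤ) → (ℤ × ℤ)
  | 0 => fun r a => gsrs r a
  | 1 => fun r a => -(gsrs r (-a))
  | 2 => fun r a => zconj (gsrs r (zconj a))
  | 3 => fun r a => -(zconj (gsrs r (-(zconj a))))

/-- Dot product on `ℝ × ℝ`. -/
def dot (p q : ℝ × ℝ) : ℝ := p.1 * q.1 + p.2 * q.2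

/-- A (possibly rotated) half-open square of side length `l` in `ℝ × ℝ`. -/
def IsHalfOpenSquare (S : Set (ℝ × ℝ)) (l : ℝ) : Prop :=
  ∃ c u v : ℝ × ℝ, dot u v = 0 ∧ dot u u = 1 ∧ dot v v = 1 ∧
    S = {p | 0 ≤ dot (p - c) u ∧ dot (p - c) u < l ∧
             0 ≤ dot (p - c) v ∧ dot (p - c) v < l}

/-!
Writing `r · a` in coordinates, `γ_r(a) = -(⌊⟪r, w₁⟫⌋, ⌊⟪r, w₂⟫⌋)` with `w₁ = (a₁, -a₂)` and
`w₂ = (a₂, a₁)`, two orthogonal vectors of squared length `|a|²`. Prescribing the two floors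
confines `s` to a product of two half-open strips of width `1/|a|` across `w₁` and `w₂`, i.e. to
a half-open square of side `1/|a|`. Each variant `γ^{(i)}` is `γ` evaluated at `±a` or `±ā`
followed by an injective map, so the witness set is an intersection of four such squares, and
squares are convex as intersections of half-planes.
-/

section Dot

variable (p q w : ℝ × ℝ) (t : ℝ)

lemma dot_comm : dot p q = dot q p := by
  simp only [dot]; ring

lemma dot_add_left : dot (p + q) w = dot p w + dot q w := by
  simp only [dot, Prod.fst_add, Prod.snd_add]; ring

lemma dot_sub_left : dot (p - q) w = dot p w - dot q w := by
  simp only [dot, Prod.fst_sub, Prod.snd_sub]; ring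

lemma dot_smul_left : dot (t • p) w = t * dot p w := by
  simp only [dot, Prod.smul_fst, Prod.smul_snd, smul_eq_mul]; ring

lemma dot_smul_right : dot p (t • w) = t * dot p w := by
  rw [dot_comm, dot_smul_left, dot_comm]

lemma isLinearMap_dot_left : IsLinearMap ℝ (fun p => dot p w) :=
  ⟨fun p q => dot_add_left p q w, fun t p => dot_smul_left p w t⟩

end Dot

lemma IsHalfOpenSquare.convex {S : Set (ℝ × ℝ)} {l : ℝ} (h : IsHalfOpenSquare S l) :
    Convex ℝ S := by
  obtain ⟨c, u, v, -, -, -, rfl⟩ := h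
  have hu := isLinearMap_dot_left u
  have hv := isLinearMap_dot_left v
  have hS : {p | 0 ≤ dot (p - c) u ∧ dot (p - c) u < l ∧ 0 ≤ dot (p - c) v ∧ dot (p - c) v < l}
      = {p | dot c u ≤ dot p u} ∩ {p | dot p u < l + dot c u} ∩
        ({p | dot c v ≤ dot p v} ∩ {p | dot p v < l + dot c v}) := by
    ext p
    simp only [dot_sub_left, Set.mem_ofPred_eq, Set.mem_inter_iff, sub_nonneg, sub_lt_iff_lt_add]
    tauto
  rw [hS]
  exact ((convex_halfSpace_ge hu _).inter (convex_halfSpace_lt hu _)).inter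
    ((convex_halfSpace_ge hv _).inter (convex_halfSpace_lt hv _))

lemma Int.floor_eq_iff_sub_div {x n : ℝ} (hn : 0 < n) (m : ℤ) :
    ⌊x⌋ = m ↔ 0 ≤ (x - m) / n ∧ (x - m) / n < 1 / n := by
  rw [Int.floor_eq_iff, div_nonneg_iff, div_lt_div_iff_of_pos_right hn]
  constructor
  · rintro ⟨hm, hm1⟩
    exact ⟨Or.inl ⟨by linarith, hn.le⟩, by linarith⟩
  · rintro ⟨⟨hm, -⟩ | ⟨-, hn'⟩, hm1⟩
    · exact ⟨by linarith, by linarith⟩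
    · linarith

lemma isHalfOpenSquare_floor_dot {w₁ w₂ : ℝ × ℝ} {N : ℝ} (hN : 0 < N) (h₁₂ : dot w₁ w₂ = 0)
    (h₁ : dot w₁ w₁ = N) (h₂ : dot w₂ w₂ = N) (m₁ m₂ : ℤ) :
    IsHalfOpenSquare {s | ⌊dot s w₁⌋ = m₁ ∧ ⌊dot s w₂⌋ = m₂} (1 / √N) := by
  set n := √N
  have hn : 0 < n := Real.sqrt_pos.2 hN
  have hnn : n * n = N := Real.mul_self_sqrt hN.le
  have h₂₁ : dot w₂ w₁ = 0 := by rw [dot_comm, h₁₂]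
  set c := ((m₁ : ℝ) / N) • w₁ + ((m₂ : ℝ) / N) • w₂
  have hproj : ∀ p w, dot (p - c) ((1 / n) • w) =
      (dot p w - (m₁ / N * dot w₁ w + m₂ / N * dot w₂ w)) / n := by
    intro p w
    rw [dot_smul_right, dot_sub_left, dot_add_left, dot_smul_left, dot_smul_left]
    ring
  refine ⟨c, (1 / n) • w₁, (1 / n) • w₂, ?_, ?_, ?_, ?_⟩
  · rw [dot_smul_left, dot_smul_right, h₁₂]; ring
  · rw [dot_smul_left, dot_smul_right, h₁, ← hnn]; field_simp
  · rw [dot_smul_left, dot_smul_right, h₂, ← hnn]; field_simp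
  · ext p
    simp only [Set.mem_ofPred_eq, hproj, h₁, h₂, h₁₂, h₂₁, Int.floor_eq_iff_sub_div hn,
      div_mul_cancel₀ _ hN.ne', mul_zero, add_zero, zero_add, and_assoc]

lemma gsrs_eq_neg_floor_dot (r : ℝ × ℝ) (b : ℤ × ℤ) :
    gsrs r b = (-⌊dot r ((b.1 : ℝ), -(b.2 : ℝ))⌋, -⌊dot r ((b.2 : ℝ), (b.1 : ℝ))⌋) := by
  simp only [gsrs, dot, mul_neg, sub_eq_add_neg]

lemma sq_add_sq_pos_of_ne_zero {b : ℤ × ℤ} (hb : b ≠ 0) : 0 < (b.1 : ℝ) ^ 2 + (b.2 : ℝ) ^ 2 := by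
  obtain ⟨b₁, b₂⟩ := b
  by_cases h₁ : b₁ = 0
  · have h₂ : b₂ ≠ 0 := fun h₂ => hb (by simp [h₁, h₂])
    positivity
  · positivity

lemma isHalfOpenSquare_gsrs_fiber (r : ℝ × ℝ) {b : ℤ × ℤ} (hb : b ≠ 0) :
    IsHalfOpenSquare {s | gsrs s b = gsrs r b} (1 / √((b.1 : ℝ) ^ 2 + (b.2 : ℝ) ^ 2)) := by
  simp only [gsrs_eq_neg_floor_dot r, gsrs_eq_neg_floor_dot _ b, Prod.mk.injEq, neg_inj]
  exact isHalfOpenSquare_floor_dot (sq_add_sq_pos_of_ne_zero hb) (by simp only [dot]; ring)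
    (by simp only [dot]; ring) (by simp only [dot]; ring) _ _

lemma zconj_fst (a : ℤ × ℤ) : (zconj a).1 = a.1 := rfl

lemma zconj_snd (a : ℤ × ℤ) : (zconj a).2 = -a.2 := rfl

lemma zconj_injective : Function.Injective zconj :=
  Function.Involutive.injective fun a => by simp [zconj]

lemma isHalfOpenSquare_gsrsVar_fiber (i : Fin 4) (r : ℝ × ℝ) {a : ℤ × ℤ} (ha : a ≠ 0) :
    IsHalfOpenSquare {s | gsrsVar i s a = gsrsVar i r a}
      (1 / √((a.1 : ℝ) ^ 2 + (a.2 : ℝ) ^ 2)) := by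
  have hconj : zconj a ≠ 0 := (zconj_injective.ne_iff' rfl).2 ha
  fin_cases i
  · exact isHalfOpenSquare_gsrs_fiber r ha
  · simpa [gsrsVar] using isHalfOpenSquare_gsrs_fiber r (neg_ne_zero.2 ha)
  · simpa [gsrsVar, zconj_injective.eq_iff, zconj_fst, zconj_snd] using
      isHalfOpenSquare_gsrs_fiber r hconj
  · simpa [gsrsVar, zconj_injective.eq_iff, zconj_fst, zconj_snd] using
      isHalfOpenSquare_gsrs_fiber r (neg_ne_zero.2 hconj)

theorem witness_set_is_intersection_of_squares (r : ℝ × ℝ) (a : ℤ × ℤ)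
    (ha : a ≠ (0, 0)) :
    ∃ S₁ S₂ S₃ S₄ : Set (ℝ × ℝ),
      IsHalfOpenSquare S₁ (1 / Real.sqrt ((a.1 : ℝ)^2 + (a.2 : ℝ)^2)) ∧
      IsHalfOpenSquare S₂ (1 / Real.sqrt ((a.1 : ℝ)^2 + (a.2 : ℝ)^2)) ∧
      IsHalfOpenSquare S₃ (1 / Real.sqrt ((a.1 : ℝ)^2 + (a.2 : ℝ)^2)) ∧
      IsHalfOpenSquare S₄ (1 / Real.sqrt ((a.1 : ℝ)^2 + (a.2 : ℝ)^2)) ∧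
      {s : ℝ × ℝ | ∀ i : Fin 4, gsrsVar i s a = gsrsVar i r a} = S₁ ∩ S₂ ∩ S₃ ∩ S₄ ∧
      Convex ℝ {s : ℝ × ℝ | ∀ i : Fin 4, gsrsVar i s a = gsrsVar i r a} := by
  have hsq (i : Fin 4) := isHalfOpenSquare_gsrsVar_fiber i r ha
  have hset : {s : ℝ × ℝ | ∀ i : Fin 4, gsrsVar i s a = gsrsVar i r a} =
      {s | gsrsVar 0 s a = gsrsVar 0 r a} ∩ {s | gsrsVar 1 s a = gsrsVar 1 r a} ∩
        {s | gsrsVar 2 s a = gsrsVar 2 r a} ∩ {s | gsrsVar 3 s a = gsrsVar 3 r a} := by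
    ext s
    simp only [Fin.forall_fin_succ, IsEmpty.forall_iff, Set.mem_ofPred_eq, Set.mem_inter_iff]
    tauto
  refine ⟨_, _, _, _, hsq 0, hsq 1, hsq 2, hsq 3, hset, ?_⟩
  rw [hset]
  exact (((hsq 0).convex.inter (hsq 1).convex).inter (hsq 2).convex).inter (hsq 3).convex
end
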